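/- A word over Σ = A ∪ Ā is irreducible with respect to the system R (rules a b̄ → b̄ a for a ≠ b; a b b̄ → a b̄ b; a ā b̄ → ā a b̄) if and only if it has the form ū · (a₁ā₁ a₂ā₂ … aₙāₙ) · w for some words u, w ∈ A* and letters a₁,…,aₙ ∈ A, where ū denotes the letter-wise barred copy of u. -/
import Mathlib


/-- A basic queue action: write a letter or read a letter. -/
inductive Act (A : Type) : Type
  | wr (a : A)
  | rd (a : A)
deriving DecidableEq

variable {A : Type} [DecidableEq A]

/-- The action of words over `Act A` on queue states `A* ∪ {⊥}` (⊥ = `none`). -/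
def act : Option (List A) → List (Act A) → Option (List A)
  | q, [] => q
  | none, _ :: _ => none
  | some q, (Act.wr a) :: u => act (some (q ++ [a])) u
  | some q, (Act.rd a) :: u =>
    match q with
    | [] => none
    | b :: q' => if b = a then act (some q') u else none

/-- Two words over `Act A` are equivalent if they act identically on all queues. -/
def qequiv (u v : List (Act A)) : Prop := ∀ q : List A, act (some q) u = act (some q) v

/-- Writing the word `w`. -/
def W (w : List A) : List (Act A) := w.map Act.wr

/-- Reading the word `w` (the barred copy of `w`). -/
def R (w : List A) : List (Act A) := w.map Act.rd

/-- `shuffle s` is the word `s₁ s̄₁ s₂ s̄₂ … sₖ s̄ₖ`. -/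
def shuffle (s : List A) : List (Act A) := s.flatMap fun a => [Act.wr a, Act.rd a]

/-- The projection to write letters. -/
def prW (w : List (Act A)) : List A :=
  w.filterMap fun x => match x with | Act.wr a => some a | Act.rd _ => none

/-- The projection to read letters (with the bars removed). -/
def prR (w : List (Act A)) : List A :=
  w.filterMap fun x => match x with | Act.wr _ => none | Act.rd a => some a

theorem act_append (u v : List (Act A)) : ∀ q, act q (u ++ v) = act (act q u) v := by
  induction u with
  | nil =>
      intro q
      cases q <;> rfl
  | cons x u ih =>
      intro q
      cases q with
      | none =>
          simp only [List.cons_append, act]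
          cases v with
          | nil => rfl
          | cons _ _ => rfl
      | some q =>
          cases x with
          | wr a => simpa [act] using ih _
          | rd a =>
              cases q with
              | nil =>
                  simp only [List.cons_append, act]
                  cases v with
                  | nil => rfl
                  | cons _ _ => rfl
              | cons b q' =>
                  by_cases h : b = a
                  · simp [List.cons_append, act, h, ih]
                  · simp only [List.cons_append, act, if_neg h]
                    cases v with
                    | nil => rfl
                    | cons _ _ => rfl

/-- The setoid of queue-action equivalence. -/
def qsetoid (A : Type) [DecidableEq A] : Setoid (List (Act A)) :=
  ⟨qequiv, ⟨fun _ _ => rfl, fun h q => (h q).symm, fun h1 h2 q => (h1 q).trans (h2 q)⟩⟩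

/-- The monoid of queue actions. -/
def QAct (A : Type) [DecidableEq A] : Type := Quotient (qsetoid A)

theorem act_none : ∀ v : List (Act A), act (none : Option (List A)) v = none
  | [] => rfl
  | _ :: _ => rfl

theorem qequiv_append {u u' v v' : List (Act A)} (hu : qequiv u u') (hv : qequiv v v') :
    qequiv (u ++ v) (u' ++ v') := by
  intro q
  rw [act_append, act_append, hu q]
  cases h : act (some q) u' with
  | none => rw [act_none, act_none]
  | some q' => exact hv q'

instance : Monoid (QAct A) where
  mul := Quotient.map₂ (· ++ ·) (fun _ _ hu _ _ hv => qequiv_append hu hv)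
  one := Quotient.mk (qsetoid A) []
  mul_assoc := by
    rintro ⟨u⟩ ⟨v⟩ ⟨w⟩
    exact congrArg (Quotient.mk (qsetoid A)) (List.append_assoc u v w)
  one_mul := by
    rintro ⟨u⟩
    rfl
  mul_one := by
    rintro ⟨u⟩
    exact congrArg (Quotient.mk (qsetoid A)) (List.append_nil u)

/-- The class of a word in the monoid of queue actions. -/
def cls (w : List (Act A)) : QAct A := Quotient.mk (qsetoid A) w

theorem cls_mul (u v : List (Act A)) : cls u * cls v = cls (u ++ v) := rfl

/-- The rules of the semi-Thue system `R`. -/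
inductive Rule : List (Act A) → List (Act A) → Prop
  | comm (a b : A) (h : a ≠ b) : Rule [Act.wr a, Act.rd b] [Act.rd b, Act.wr a]
  | wwr (a b : A) : Rule [Act.wr a, Act.wr b, Act.rd b] [Act.wr a, Act.rd b, Act.wr b]
  | wrr (a b : A) : Rule [Act.wr a, Act.rd a, Act.rd b] [Act.rd a, Act.wr a, Act.rd b]

/-- One rewriting step of the semi-Thue system `R`. -/
def Step (u v : List (Act A)) : Prop :=
  ∃ (l r x y : List (Act A)), Rule x y ∧ u = l ++ x ++ r ∧ v = l ++ y ++ r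


/-- Auxiliary: does the list start with a read? -/
def rdHead : List (Act A) → Bool
  | Act.rd _ :: _ => true
  | _ => false

@[simp] theorem rdHead_nil : rdHead ([] : List (Act A)) = false := rfl
@[simp] theorem rdHead_wr (a : A) (t : List (Act A)) : rdHead (Act.wr a :: t) = false := rfl
@[simp] theorem rdHead_rd (a : A) (t : List (Act A)) : rdHead (Act.rd a :: t) = true := rfl

/-- Irreducibility as a boolean predicate. -/
def ff : List (Act A) → Bool
  | [] => true
  | Act.rd _ :: t => ff t
  | [Act.wr _] => true
  | Act.wr a :: Act.rd b :: t => decide (a = b) && !rdHead t && ff (Act.rd b :: t)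
  | Act.wr _ :: Act.wr b :: t => !rdHead t && ff (Act.wr b :: t)

theorem ff_cons (c : Act A) (t : List (Act A)) (h : ff (c :: t) = true) : ff t = true := by
  cases c with
  | rd a => simpa [ff] using h
  | wr a =>
    cases t with
    | nil => rfl
    | cons d t' =>
      cases d with
      | rd b =>
        simp only [ff, Bool.and_eq_true] at h
        simpa [ff] using h.2
      | wr b =>
        simp only [ff, Bool.and_eq_true] at h
        exact h.2

theorem ff_append (l m : List (Act A)) (h : ff (l ++ m) = true) : ff m = true := by
  induction l with
  | nil => exact h
  | cons c l ih => exact ih (ff_cons _ _ h)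

theorem rule_ff {x y : List (Act A)} (hx : Rule x y) (r : List (Act A)) :
    ff (x ++ r) = false := by
  cases hx with
  | comm a b h => simp [ff, h]
  | wwr a b => simp [ff]
  | wrr a b => simp [ff]

theorem step_cons (c : Act A) {t : List (Act A)} (h : ∃ v, Step t v) :
    ∃ v, Step (c :: t) v := by
  obtain ⟨v, l, r, x, y, hr, ht, hv⟩ := h
  exact ⟨c :: v, c :: l, r, x, y, hr, by simp [ht], by simp [hv]⟩

theorem step_of_ff_false : ∀ w : List (Act A), ff w = false → ∃ v, Step w v := by
  intro w hw
  induction w using ff.induct with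
  | case1 => simp [ff] at hw
  | case2 a t ih => exact step_cons _ (ih (by simpa [ff] using hw))
  | case3 a => simp [ff] at hw
  | case4 a b t ih =>
    by_cases hab : a = b
    · subst hab
      cases ht : rdHead t with
      | true =>
        match t, ht with
        | Act.rd c :: t', _ =>
          exact ⟨Act.rd a :: Act.wr a :: Act.rd c :: t', [], t',
            [Act.wr a, Act.rd a, Act.rd c], [Act.rd a, Act.wr a, Act.rd c],
            Rule.wrr a c, by simp, by simp⟩
      | false =>
        have : ff (Act.rd a :: t) = false := by
          simp only [ff, ht] at hw ⊢; simpa using hw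
        exact step_cons _ (ih this)
    · exact ⟨Act.rd b :: Act.wr a :: t, [], t, [Act.wr a, Act.rd b], [Act.rd b, Act.wr a],
        Rule.comm a b hab, by simp, by simp⟩
  | case5 a b t ih =>
    cases ht : rdHead t with
    | true =>
      match t, ht with
      | Act.rd c :: t', _ =>
        by_cases hbc : b = c
        · subst hbc
          exact ⟨Act.wr a :: Act.rd b :: Act.wr b :: t', [], t',
            [Act.wr a, Act.wr b, Act.rd b], [Act.wr a, Act.rd b, Act.wr b],
            Rule.wwr a b, by simp, by simp⟩
        · exact ⟨Act.wr a :: Act.rd c :: Act.wr b :: t', [Act.wr a], t',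
            [Act.wr b, Act.rd c], [Act.rd c, Act.wr b],
            Rule.comm b c hbc, by simp, by simp⟩
    | false =>
      have : ff (Act.wr b :: t) = false := by
        simp only [ff, ht] at hw ⊢; simpa using hw
      exact step_cons _ (ih this)

theorem headNotRd (s v : List A) : rdHead (shuffle s ++ W v) = false := by
  cases s with
  | nil =>
    cases v with
    | nil => rfl
    | cons a v => simp [shuffle, W]
  | cons a s => simp [shuffle]

theorem ff_W (v : List A) : ff (W v) = true := by
  induction v with
  | nil => rfl
  | cons a v ih =>
    cases v with
    | nil => rfl
    | cons b v' =>
      simp only [W, List.map_cons] at ih ⊢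
      simp [ff, ih, show rdHead (List.map Act.wr v' : List (Act A)) = false by
        cases v' <;> simp [rdHead]]

theorem ff_form (u s v : List A) : ff (R u ++ shuffle s ++ W v) = true := by
  induction u with
  | cons a u ih => simpa [R, ff] using ih
  | nil =>
    simp only [R, List.map_nil, List.nil_append]
    induction s with
    | nil => simpa [shuffle] using ff_W (A := A) v
    | cons a s ihs =>
      have h1 : rdHead (shuffle s ++ W v) = false := headNotRd s v
      simp only [shuffle, List.flatMap_cons, List.cons_append, List.nil_append] at h1 ihs ⊢
      simp only [ff, Bool.and_eq_true, decide_eq_true_eq, Bool.not_eq_true']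
      exact ⟨⟨by simp, h1⟩, ihs⟩

theorem form_of_ff : ∀ w : List (Act A), ff w = true →
    ∃ u s v : List A, w = R u ++ shuffle s ++ W v := by
  intro w hw
  induction w using ff.induct with
  | case1 => exact ⟨[], [], [], rfl⟩
  | case2 a t ih =>
    obtain ⟨u, s, v, h⟩ := ih (by simpa [ff] using hw)
    exact ⟨a :: u, s, v, by simp [R, h]⟩
  | case3 a => exact ⟨[], [], [a], rfl⟩
  | case4 a b t ih =>
    simp only [ff, Bool.and_eq_true, decide_eq_true_eq, Bool.not_eq_true'] at hw
    obtain ⟨⟨hab, ht⟩, hf⟩ := hw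
    subst hab
    obtain ⟨u, s, v, h⟩ := ih hf
    cases u with
    | nil =>
      exfalso
      have h0 := headNotRd s v
      have hh : Act.rd a :: t = shuffle s ++ W v := by simpa [R] using h
      rw [← hh] at h0
      simp at h0
    | cons c u' =>
      simp only [R, List.map_cons, List.cons_append, List.cons.injEq, Act.rd.injEq] at h
      obtain ⟨hac, h2⟩ := h
      cases u' with
      | cons d u'' => rw [h2] at ht; simp [R] at ht
      | nil =>
        simp only [R, List.map_nil, List.nil_append] at h2
        exact ⟨[], a :: s, v, by simp [R, shuffle, h2]⟩
  | case5 a b t ih =>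
    simp only [ff, Bool.and_eq_true, Bool.not_eq_true'] at hw
    obtain ⟨ht, hf⟩ := hw
    obtain ⟨u, s, v, h⟩ := ih hf
    cases u with
    | cons c u' => simp [R] at h
    | nil =>
      simp only [R, List.map_nil, List.nil_append] at h
      cases s with
      | cons c s' =>
        simp only [shuffle, List.flatMap_cons, List.cons_append, List.cons.injEq,
          Act.wr.injEq] at h
        rw [h.2] at ht
        simp at ht
      | nil =>
        simp only [shuffle, List.flatMap_nil, List.nil_append] at h
        cases v with
        | nil => simp [W] at h
        | cons d v' =>
          exact ⟨[], [], a :: d :: v', by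
            simp only [W, List.map_cons, R, List.map_nil, shuffle, List.flatMap_nil,
              List.nil_append]
            simp [W, List.map_cons] at h
            simp [h.1, h.2]⟩

/-- A word over `Σ` is irreducible w.r.t. `R` iff it has the form
`ū · (a₁ā₁ … aₙāₙ) · w` for words `u, w ∈ A*` and letters `a₁, …, aₙ ∈ A`. -/
theorem stmt6 [Fintype A] (w : List (Act A)) :
    (¬ ∃ v, Step w v) ↔ ∃ u s v : List A, w = R u ++ shuffle s ++ W v := by
  constructor
  · intro h
    apply form_of_ff
    cases hff : ff w with
    | true => rfl
    | false => exact absurd (step_of_ff_false w hff) h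
  · rintro ⟨u, s, v, rfl⟩ ⟨v', l, r, x, y, hr, he, _⟩
    have h1 : ff (x ++ r) = true := by
      have := ff_form u s v
      rw [he, List.append_assoc] at this
      exact ff_append l _ this
    rw [rule_ff hr r] at h1
    exact Bool.false_ne_true h1
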